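/- arXiv:2303.03902 — 5 statements merged into one kernel-verified Lean document; each statement's English description precedes it below -/
import Mathlib

section
/- Let M be the real symmetric (p×p) bordered diagonal matrix with first row (α, b_1, ..., b_{p-1}), first column (α, b_1, ..., b_{p-1})ᵀ, diagonal entries α, α_1, ..., α_{p-1}, and zeros elsewhere. Then the characteristic polynomial of M is χ_M(X) = (X - α)·∏_{i=1}^{p-1}(X - α_i) - Σ_{k=1}^{p-1} b_k² · ∏_{i≠k}(X - α_i). -/
/-!
Write the characteristic matrix as a block matrix `[A B; C D]` with `A` of size `1 × 1` and
`D = diag(X - dᵢ)`. Right-multiplying by `[det D, 0; -adj(D) C, 1]` makes it block upper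
triangular, so `det [A B; C D] · det D = (det D · A - B adj(D) C) · det D`. Since `det D` is monic
it may be cancelled, and for diagonal `D` the adjugate is `diag(∏_{i ≠ j} (X - dᵢ))`.
-/

open Matrix Polynomial

namespace Matrix

variable {m n R : Type*} [Fintype m] [Fintype n] [DecidableEq m] [DecidableEq n] [CommRing R]

theorem det_fromBlocks_mul_det_pow (A : Matrix m m R) (B : Matrix m n R) (C : Matrix n m R)
    (D : Matrix n n R) :
    det (fromBlocks A B C D) * det D ^ Fintype.card m =
      det (det D • A - B * adjugate D * C) * det D := by
  have hclear : fromBlocks A B C D * fromBlocks (det D • 1) 0 (-(adjugate D * C)) 1 =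
      fromBlocks (det D • A - B * adjugate D * C) B 0 D := by
    rw [fromBlocks_multiply, Matrix.mul_neg, Matrix.mul_neg, ← Matrix.mul_assoc D, mul_adjugate]
    simp [Matrix.mul_assoc, sub_eq_add_neg]
  have h := congrArg det hclear
  rwa [det_mul, det_fromBlocks_zero₁₂, det_fromBlocks_zero₂₁, det_smul, det_one, det_one,
    mul_one, mul_one] at h

theorem det_fromBlocks_of_unique [Unique m] (A : Matrix m m R) (B : Matrix m n R)
    (C : Matrix n m R) (D : Matrix n n R) (hD : IsRightRegular (det D)) :
    det (fromBlocks A B C D) = det D * A default default - (B * adjugate D * C) default default := by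
  have h := det_fromBlocks_mul_det_pow A B C D
  rw [Fintype.card_unique, pow_one, det_unique (det D • A - _)] at h
  simpa using hD h

theorem charpoly_fromBlocks_diagonal (a : R) (u v d : n → R) :
    (fromBlocks (of fun _ _ => a) (replicateRow Unit u) (replicateCol Unit v)
      (diagonal d)).charpoly =
      (X - C a) * ∏ i, (X - C (d i)) -
        ∑ j, C (u j * v j) * ∏ i ∈ Finset.univ.erase j, (X - C (d i)) := by
  have hD : IsRightRegular (det (diagonal fun i => X - C (d i))) := by
    rw [det_diagonal]
    exact (monic_prod_of_monic _ _ fun i _ => monic_X_sub_C (d i)).isRegular.right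
  rw [charpoly, charmatrix_fromBlocks, charmatrix_diagonal, det_fromBlocks_of_unique _ _ _ _ hD,
    adjugate_diagonal, det_diagonal, charmatrix_apply_eq, of_apply, mul_comm]
  congr 1
  refine Finset.sum_congr rfl fun j _ => ?_
  simp [mul_apply, diagonal_apply]
  ring

end Matrix

/-- The characteristic polynomial of the bordered diagonal matrix with corner `α`,
border `b`, and diagonal `d` is
`(X - α) ∏ᵢ (X - dᵢ) - ∑ₖ bₖ² ∏_{i ≠ k} (X - dᵢ)`. -/
theorem stmt3 (k : ℕ) (α : ℝ) (b d : Fin k → ℝ)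
    (M : Matrix (Unit ⊕ Fin k) (Unit ⊕ Fin k) ℝ)
    (hM11 : M (Sum.inl ()) (Sum.inl ()) = α)
    (hMrow : ∀ i, M (Sum.inl ()) (Sum.inr i) = b i)
    (hMcol : ∀ i, M (Sum.inr i) (Sum.inl ()) = b i)
    (hMdiag : ∀ i j, M (Sum.inr i) (Sum.inr j) = if i = j then d i else 0) :
    M.charpoly =
      (X - Polynomial.C α) * ∏ i, (X - Polynomial.C (d i)) -
        ∑ j, Polynomial.C (b j ^ 2) * ∏ i ∈ Finset.univ.erase j, (X - Polynomial.C (d i)) := by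
  have hM : M = fromBlocks (of fun _ _ => α) (replicateRow Unit b) (replicateCol Unit b)
      (diagonal d) := by
    ext (⟨⟩ | i) (⟨⟩ | j) <;> simp [hM11, hMrow, hMcol, hMdiag, diagonal_apply]
  rw [hM, charpoly_fromBlocks_diagonal]
  simp only [sq]
end

section
/- Let M be the bordered diagonal matrix as above, with all α_i pairwise distinct and all b_i nonzero. Then λ ∈ ℝ \ {α_1, ..., α_{p-1}} is an eigenvalue of M if and only if α = λ + Σ_{i=1}^{p-1} b_i² / (α_i - λ). -/
/-!
Taking the Schur complement of the invertible diagonal block `diagonal (λ - d)` gives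
`det (λ - M) = (λ - α - ∑ i, b i ^ 2 / (λ - d i)) * ∏ i, (λ - d i)`, and the product does not
vanish when `λ` avoids every `d i`.
-/

open Matrix Finset

namespace Matrix

variable {K ι : Type*} [Field K] [Fintype ι] [DecidableEq ι]

def borderedDiagonal (a : K) (b d : ι → K) : Matrix (Unit ⊕ ι) (Unit ⊕ ι) K :=
  fromBlocks (of fun _ _ => a) (replicateRow Unit b) (replicateCol Unit b) (diagonal d)

theorem det_borderedDiagonal (a : K) (b : ι → K) {d : ι → K} (hd : ∀ i, d i ≠ 0) :
    (borderedDiagonal a b d).det = (a - ∑ i, b i ^ 2 / d i) * ∏ i, d i := by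
  have hdet : IsUnit (diagonal d).det := by
    simpa [det_diagonal, prod_ne_zero_iff] using hd
  let := invertibleOfIsUnitDet _ hdet
  rw [borderedDiagonal, det_fromBlocks₂₂, invOf_eq_nonsing_inv, inv_diagonal, det_diagonal,
    det_unique, mul_comm]
  have hunit : IsUnit d := Pi.isUnit_iff.mpr fun i => (hd i).isUnit
  simp [replicateRow, replicateCol, mul_apply, diagonal, Ring.inverse, hunit, div_eq_mul_inv, sq,
    mul_right_comm]

theorem algebraMap_sub_borderedDiagonal (r a : K) (b d : ι → K) :
    algebraMap K _ r - borderedDiagonal a b d =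
      borderedDiagonal (r - a) (-b) (fun i => r - d i) := by
  ext (_ | i) (_ | j) <;>
    simp [borderedDiagonal, algebraMap_eq_diagonal, diagonal, Pi.algebraMap_apply]
  split_ifs <;> simp [*]

theorem mem_spectrum_borderedDiagonal_iff {r : K} (a : K) (b : ι → K) {d : ι → K}
    (hr : ∀ i, r ≠ d i) :
    r ∈ spectrum K (borderedDiagonal a b d) ↔ a = r + ∑ i, b i ^ 2 / (d i - r) := by
  have hprod : ∏ i, (r - d i) ≠ 0 := prod_ne_zero_iff.mpr fun i _ => sub_ne_zero.mpr (hr i)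
  have hsum : ∑ i, (-b) i ^ 2 / (r - d i) = -∑ i, b i ^ 2 / (d i - r) := by
    simp only [Pi.neg_apply, neg_sq, ← sum_neg_distrib, ← div_neg, neg_sub]
  rw [spectrum.mem_iff, isUnit_iff_isUnit_det, isUnit_iff_ne_zero, not_not,
    algebraMap_sub_borderedDiagonal, det_borderedDiagonal _ _ fun i => sub_ne_zero.mpr (hr i),
    mul_eq_zero, or_iff_left hprod, hsum]
  constructor <;> intro h <;> linear_combination -h

end Matrix

theorem stmt4_general (k : ℕ) (α : ℝ) (b d : Fin k → ℝ)
    (M : Matrix (Unit ⊕ Fin k) (Unit ⊕ Fin k) ℝ)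
    (hM11 : M (Sum.inl ()) (Sum.inl ()) = α)
    (hMrow : ∀ i, M (Sum.inl ()) (Sum.inr i) = b i)
    (hMcol : ∀ i, M (Sum.inr i) (Sum.inl ()) = b i)
    (hMdiag : ∀ i j, M (Sum.inr i) (Sum.inr j) = if i = j then d i else 0)
    (lam : ℝ) (hlam : ∀ i, lam ≠ d i) :
    lam ∈ spectrum ℝ M ↔ α = lam + ∑ i, b i ^ 2 / (d i - lam) := by
  have hM : M = borderedDiagonal α b d := by
    ext (_ | i) (_ | j) <;> simp [borderedDiagonal, diagonal, hM11, hMrow, hMcol, hMdiag]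
  rw [hM]
  exact mem_spectrum_borderedDiagonal_iff α b hlam

/-- For the bordered diagonal matrix with pairwise distinct diagonal entries `d i`
and nonzero border entries `b i`, a real number `lam` different from all `d i` is
an eigenvalue iff `α = lam + ∑ i, b i ^ 2 / (d i - lam)`. -/
theorem stmt4 (k : ℕ) (α : ℝ) (b d : Fin k → ℝ)
    (hd : Function.Injective d) (hb : ∀ i, b i ≠ 0)
    (M : Matrix (Unit ⊕ Fin k) (Unit ⊕ Fin k) ℝ)
    (hM11 : M (Sum.inl ()) (Sum.inl ()) = α)
    (hMrow : ∀ i, M (Sum.inl ()) (Sum.inr i) = b i)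
    (hMcol : ∀ i, M (Sum.inr i) (Sum.inl ()) = b i)
    (hMdiag : ∀ i j, M (Sum.inr i) (Sum.inr j) = if i = j then d i else 0)
    (lam : ℝ) (hlam : ∀ i, lam ≠ d i) :
    lam ∈ spectrum ℝ M ↔ α = lam + ∑ i, b i ^ 2 / (d i - lam) :=
  stmt4_general k α b d M hM11 hMrow hMcol hMdiag lam hlam
end

section
/- Let p ≥ 2 and define the sequence (u_n) by u_0 = 1, u_1 = 2p - 5, and u_{k+2} = (2p-5)·u_{k+1} - (k+1)(2p-(k+1))·u_k. Then Σ_{n≥0} (u_n/n!)·x^n = (1+x)^{2p-3}·(1-x)², and for 2 ≤ n ≤ 2p-3, u_n = 4·((2p-3)!/(2p-1-n)!)·(n - p_+)(n - p_-), where p_± = (2p-1 ± √(2p-1))/2. -/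
/-!
Put `m = 2p - 3` and `F = (1 + X)^m (1 - X)^2`. Logarithmic differentiation gives
`(1 - X²) F' = ((m - 2) - (m + 2) X) F`, so the coefficients of `F` satisfy
`(n + 2) c (n + 2) = (m - 2) c (n + 1) - (m + 2 - n) c n`. Hence `n! c n` obeys the recurrence
of `u` with the same initial values, `u n = n! c n`, and the exponential generating function of
`u` is the polynomial `F`.

For the closed form, `(m + 2 - n)! u n = m! ((2n - m - 2)² - (m + 2))` for all `n ≤ m + 2`
follows from the recurrence by induction, and `4 (n - p₊) (n - p₋) = (2n - m - 2)² - (m + 2)`.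
-/

open Polynomial

namespace Polynomial

variable {R : Type*}

theorem coeff_X_mul_derivative [Semiring R] (p : R[X]) (n : ℕ) :
    (X * derivative p).coeff n = p.coeff n * n := by
  cases n with
  | zero => simp
  | succ n => rw [coeff_X_mul, coeff_derivative, Nat.cast_succ]

theorem hasSum_coeff_mul_pow [CommSemiring R] [TopologicalSpace R] (p : R[X]) (x : R) :
    HasSum (fun n => p.coeff n * x ^ n) (p.eval x) := by
  rw [eval_eq_sum_range]
  exact hasSum_sum_of_ne_finset_zero fun n hn => by
    rw [coeff_eq_zero_of_natDegree_lt (by simpa using hn), zero_mul]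

theorem one_add_X_mul_derivative_pow [CommRing R] (m : ℕ) :
    (1 + X) * derivative ((1 + X : R[X]) ^ m) = C (m : R) * (1 + X) ^ m := by
  cases m with
  | zero => simp
  | succ m =>
    simp only [derivative_pow_succ, derivative_add, derivative_one, derivative_X]
    push_cast
    ring

end Polynomial

section EgfPoly

variable {R : Type*} [CommRing R]

noncomputable def egfPoly (m : ℕ) : R[X] := (1 + X) ^ m * (1 - X) ^ 2

theorem coeff_zero_egfPoly (m : ℕ) : (egfPoly m : R[X]).coeff 0 = 1 := by
  simp [coeff_zero_eq_eval_zero, egfPoly]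

theorem coeff_one_egfPoly (m : ℕ) : (egfPoly m : R[X]).coeff 1 = m - 2 := by
  simpa [coeff_zero_eq_eval_zero, egfPoly, derivative_mul, derivative_pow, sub_eq_add_neg] using
    (coeff_derivative (egfPoly m : R[X]) 0).symm

theorem one_sub_X_sq_mul_derivative_egfPoly (m : ℕ) :
    (1 - X ^ 2) * derivative (egfPoly m : R[X]) =
      (C ((m : R) - 2) - C ((m : R) + 2) * X) * egfPoly m := by
  have h := one_add_X_mul_derivative_pow (R := R) m
  simp only [egfPoly, derivative_mul, derivative_sq, derivative_one, derivative_X, map_sub,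
    map_add]
  linear_combination (1 - X) ^ 3 * h

theorem coeff_egfPoly_add_two (m n : ℕ) :
    ((n : R) + 2) * (egfPoly m : R[X]).coeff (n + 2) =
      ((m : R) - 2) * (egfPoly m : R[X]).coeff (n + 1) -
        ((m : R) + 2 - n) * (egfPoly m : R[X]).coeff n := by
  have h := congrArg (coeff · (n + 1)) (one_sub_X_sq_mul_derivative_egfPoly (R := R) m)
  simp only [sub_mul, one_mul, sq, mul_assoc, coeff_sub, coeff_derivative, coeff_X_mul,
    coeff_X_mul_derivative, coeff_C_mul] at h
  push_cast at h
  linear_combination h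

end EgfPoly

theorem eq_factorial_mul_coeff_egfPoly {m : ℕ} {u : ℕ → ℝ} (h0 : u 0 = 1) (h1 : u 1 = m - 2)
    (hrec : ∀ k : ℕ, u (k + 2) = (m - 2) * u (k + 1) - (k + 1) * (m + 2 - k) * u k) (n : ℕ) :
    u n = n.factorial * (egfPoly m : ℝ[X]).coeff n := by
  induction n using Nat.twoStepInduction with
  | zero => simp [h0, coeff_zero_egfPoly]
  | one => simp [h1, coeff_one_egfPoly]
  | more k ih0 ih1 =>
    rw [hrec, ih0, ih1]
    push_cast [Nat.factorial_succ]
    linear_combination (-(k + 1) * k.factorial : ℝ) * coeff_egfPoly_add_two (R := ℝ) m k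

theorem hasSum_div_factorial_mul_pow {m : ℕ} {u : ℕ → ℝ} (h0 : u 0 = 1) (h1 : u 1 = m - 2)
    (hrec : ∀ k : ℕ, u (k + 2) = (m - 2) * u (k + 1) - (k + 1) * (m + 2 - k) * u k) (x : ℝ) :
    HasSum (fun n => u n / n.factorial * x ^ n) ((1 + x) ^ m * (1 - x) ^ 2) := by
  have hcoeff (n : ℕ) : u n / n.factorial = (egfPoly m : ℝ[X]).coeff n := by
    rw [eq_factorial_mul_coeff_egfPoly h0 h1 hrec, mul_div_cancel_left₀ _ (by positivity)]
  simpa [hcoeff, egfPoly] using hasSum_coeff_mul_pow (egfPoly m : ℝ[X]) x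

theorem factorial_mul_eq_factorial_mul_sq_sub {m : ℕ} {u : ℕ → ℝ} (h0 : u 0 = 1)
    (h1 : u 1 = m - 2)
    (hrec : ∀ k : ℕ, u (k + 2) = (m - 2) * u (k + 1) - (k + 1) * (m + 2 - k) * u k)
    {n : ℕ} (hn : n ≤ m + 2) :
    ((m + 2 - n).factorial : ℝ) * u n = m.factorial * ((2 * n - m - 2) ^ 2 - (m + 2)) := by
  induction n using Nat.twoStepInduction with
  | zero =>
    rw [Nat.sub_zero, h0]
    push_cast [Nat.factorial_succ]
    ring
  | one =>
    rw [show m + 2 - 1 = m + 1 by omega, h1]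
    push_cast [Nat.factorial_succ]
    ring
  | more k ih0 ih1 =>
    obtain ⟨j, rfl⟩ : ∃ j, m = k + j := ⟨m - k, by omega⟩
    rw [show k + j + 2 - k = j + 2 by omega] at ih0
    rw [show k + j + 2 - (k + 1) = j + 1 by omega] at ih1
    rw [show k + j + 2 - (k + 2) = j by omega, hrec]
    push_cast [Nat.factorial_succ] at ih0 ih1 ⊢
    refine mul_left_cancel₀ (by positivity : (j : ℝ) + 1 ≠ 0) ?_
    linear_combination ((k : ℝ) + j - 2) * ih1 (by omega) - ((k : ℝ) + 1) * ih0 (by omega)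

/-- For `p ≥ 2` and the sequence `u 0 = 1`, `u 1 = 2p - 5`,
`u (k+2) = (2p-5) u (k+1) - (k+1)(2p-(k+1)) u k`, the exponential generating
function equals `(1+x)^(2p-3) (1-x)^2`, and for `2 ≤ n ≤ 2p-3`,
`u n = 4 ((2p-3)!/(2p-1-n)!) (n - p₊)(n - p₋)` with
`p₊ = (2p-1+√(2p-1))/2`, `p₋ = (2p-1-√(2p-1))/2`. -/
theorem stmt7 (p : ℕ) (hp : 2 ≤ p) (u : ℕ → ℝ)
    (h0 : u 0 = 1) (h1 : u 1 = 2 * (p : ℝ) - 5)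
    (hrec : ∀ k : ℕ, u (k + 2) =
      (2 * (p : ℝ) - 5) * u (k + 1) - ((k : ℝ) + 1) * (2 * (p : ℝ) - ((k : ℝ) + 1)) * u k) :
    (∀ x : ℝ, HasSum (fun n : ℕ => u n / (n.factorial : ℝ) * x ^ n)
      ((1 + x) ^ (2 * p - 3) * (1 - x) ^ 2)) ∧
    (∀ n : ℕ, 2 ≤ n → n ≤ 2 * p - 3 →
      u n = 4 * (((2 * p - 3).factorial : ℝ) / ((2 * p - 1 - n).factorial : ℝ)) *
        ((n : ℝ) - (2 * (p : ℝ) - 1 + Real.sqrt (2 * (p : ℝ) - 1)) / 2) *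
        ((n : ℝ) - (2 * (p : ℝ) - 1 - Real.sqrt (2 * (p : ℝ) - 1)) / 2)) := by
  obtain ⟨m, hm⟩ : ∃ m, 2 * p = m + 3 := ⟨2 * p - 3, by omega⟩
  have hmR : 2 * (p : ℝ) = m + 3 := by exact_mod_cast hm
  have h1' : u 1 = m - 2 := by rw [h1, hmR]; ring
  have hrec' (k : ℕ) : u (k + 2) = (m - 2) * u (k + 1) - (k + 1) * (m + 2 - k) * u k := by
    rw [hrec, hmR]; ring
  rw [show 2 * p - 3 = m by omega]
  refine ⟨hasSum_div_factorial_mul_pow h0 h1' hrec', fun n _ hn => ?_⟩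
  have hclosed := factorial_mul_eq_factorial_mul_sq_sub h0 h1' hrec' (n := n) (by omega)
  have hsqrt : Real.sqrt (m + 2) ^ 2 = m + 2 := Real.sq_sqrt (by positivity)
  rw [show 2 * p - 1 - n = m + 2 - n by omega, show 2 * (p : ℝ) - 1 = m + 2 by linarith]
  field_simp
  linear_combination 4 * hclosed + 4 * m.factorial * hsqrt
end

section
/- For φ_1(z) = π^{-1/2}·z·e^{-|z|²/2} one has M(φ_1) = 1, P(φ_1) = 1, 8π·H(φ_1) = 1/2, hence G_μ(φ_1) = 1/2 + μ for every μ > 0. In particular, G_μ(φ_1) < G_μ(φ_0) = 1 if and only if μ < 1/2. -/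
open MeasureTheory

noncomputable def Mfun (u : ℂ → ℂ) : ℝ := ∫ z : ℂ, ‖u z‖ ^ 2
noncomputable def Pfun (u : ℂ → ℂ) : ℝ := ∫ z : ℂ, (‖z‖ ^ 2 - 1) * ‖u z‖ ^ 2
noncomputable def Hfun (u : ℂ → ℂ) : ℝ := (1 / 4) * ∫ z : ℂ, ‖u z‖ ^ 4
noncomputable def Gfun (μ : ℝ) (u : ℂ → ℂ) : ℝ := 8 * Real.pi * Hfun u + μ * Pfun u

/-- The Gaussian `φ₀(z) = π^{-1/2} e^{-|z|²/2}`. -/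
noncomputable def phi0 : ℂ → ℂ :=
  fun z => (((Real.sqrt Real.pi)⁻¹ * Real.exp (-‖z‖ ^ 2 / 2) : ℝ) : ℂ)

/-- The first special Hermite function `φ₁(z) = π^{-1/2} z e^{-|z|²/2}`. -/
noncomputable def phi1 : ℂ → ℂ :=
  fun z => (((Real.sqrt Real.pi)⁻¹ : ℝ) : ℂ) * z * ((Real.exp (-‖z‖ ^ 2 / 2) : ℝ) : ℂ)

/-!
Both `|φ₀|²` and `|φ₁|²` have the shape `π⁻¹ |z|^{2n} e^{-|z|²}` (`n = 0, 1`). Multiplying by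
`|z|²` or squaring keeps this shape (squaring turns `e^{-|z|²}` into `e^{-2|z|²}`), so `M`, `P`
and `H` are combinations of the planar Gaussian moments `∫ |z|^{2n} e^{-b|z|²} = π n! / b^{n+1}`,
which polar coordinates reduce to `Γ(n + 1)`.
-/

open Real Nat

noncomputable def gaussianWeight (n : ℕ) (b : ℝ) (z : ℂ) : ℝ :=
  (‖z‖ ^ 2) ^ n * rexp (-b * ‖z‖ ^ 2)

namespace gaussianWeight

lemma integral_eq (n : ℕ) {b : ℝ} (hb : 0 < b) :
    ∫ z, gaussianWeight n b z = π * n ! / b ^ (n + 1) := by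
  have h := Complex.integral_rpow_mul_exp_neg_mul_rpow (p := 2) (q := (2 * n : ℕ)) one_le_two
    (by linarith [(Nat.cast_nonneg _ : (0 : ℝ) ≤ (2 * n : ℕ))]) hb
  have hq : (((2 * n : ℕ) : ℝ) + 2) / 2 = (n + 1 : ℕ) := by push_cast; ring
  rw [neg_div, hq, rpow_neg hb.le, rpow_natCast, Nat.cast_add_one, Gamma_nat_eq_factorial] at h
  simp_rw [rpow_natCast, rpow_two] at h
  unfold gaussianWeight
  simp_rw [← pow_mul, h]
  field_simp

-- A non-integrable function would have integral `0`.
lemma integrable (n : ℕ) {b : ℝ} (hb : 0 < b) : Integrable (gaussianWeight n b) :=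
  Integrable.of_integral_ne_zero <| by rw [integral_eq n hb]; positivity

lemma norm_sq_mul (n : ℕ) (b : ℝ) (z : ℂ) :
    ‖z‖ ^ 2 * gaussianWeight n b z = gaussianWeight (n + 1) b z := by
  simp only [gaussianWeight]; ring

lemma sq (n : ℕ) (b : ℝ) (z : ℂ) :
    gaussianWeight n b z ^ 2 = gaussianWeight (2 * n) (2 * b) z := by
  simp only [gaussianWeight, pow_mul, mul_pow, ← Real.exp_nat_mul]; ring_nf

end gaussianWeight

section GaussianDensity

variable {u : ℂ → ℂ} {c b : ℝ} {n : ℕ}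

lemma Mfun_eq_of_norm_sq_eq (hu : ∀ z, ‖u z‖ ^ 2 = c * gaussianWeight n b z) (hb : 0 < b) :
    Mfun u = c * (π * n ! / b ^ (n + 1)) := by
  simp only [Mfun, hu, integral_const_mul, gaussianWeight.integral_eq n hb]

lemma Pfun_eq_of_norm_sq_eq (hu : ∀ z, ‖u z‖ ^ 2 = c * gaussianWeight n b z) (hb : 0 < b) :
    Pfun u = c * (π * (n + 1)! / b ^ (n + 2) - π * n ! / b ^ (n + 1)) := by
  have hpt : ∀ z, (‖z‖ ^ 2 - 1) * ‖u z‖ ^ 2 =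
      c * (gaussianWeight (n + 1) b z - gaussianWeight n b z) := fun z => by
    rw [hu, ← gaussianWeight.norm_sq_mul]; ring
  simp only [Pfun, hpt, integral_const_mul,
    integral_sub (gaussianWeight.integrable _ hb) (gaussianWeight.integrable _ hb),
    gaussianWeight.integral_eq _ hb]

lemma Hfun_eq_of_norm_sq_eq (hu : ∀ z, ‖u z‖ ^ 2 = c * gaussianWeight n b z) (hb : 0 < b) :
    Hfun u = 1 / 4 * (c ^ 2 * (π * (2 * n)! / (2 * b) ^ (2 * n + 1))) := by
  have hpt : ∀ z, ‖u z‖ ^ 4 = c ^ 2 * gaussianWeight (2 * n) (2 * b) z := fun z => by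
    rw [← gaussianWeight.sq, ← mul_pow, ← hu]; ring
  simp only [Hfun, hpt, integral_const_mul,
    gaussianWeight.integral_eq _ (by positivity : 0 < 2 * b)]

end GaussianDensity

lemma sqrt_pi_inv_mul_exp_sq (r : ℝ) :
    ((sqrt π)⁻¹ * rexp (-r / 2)) ^ 2 = π⁻¹ * rexp (-1 * r) := by
  rw [mul_pow, inv_pow, sq_sqrt pi_pos.le, ← exp_nat_mul]; ring_nf

lemma norm_phi0_sq (z : ℂ) : ‖phi0 z‖ ^ 2 = π⁻¹ * gaussianWeight 0 1 z := by
  rw [phi0, Complex.norm_real, norm_eq_abs, sq_abs, sqrt_pi_inv_mul_exp_sq, gaussianWeight]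
  ring

lemma norm_phi1_sq (z : ℂ) : ‖phi1 z‖ ^ 2 = π⁻¹ * gaussianWeight 1 1 z := by
  have h := sqrt_pi_inv_mul_exp_sq (‖z‖ ^ 2)
  simp only [phi1, norm_mul, Complex.norm_real, norm_eq_abs, abs_inv, abs_exp,
    abs_of_nonneg (sqrt_nonneg π), gaussianWeight] at h ⊢
  linear_combination ‖z‖ ^ 2 * h

lemma Mfun_phi1 : Mfun phi1 = 1 := by
  rw [Mfun_eq_of_norm_sq_eq norm_phi1_sq one_pos]
  field_simp [pi_ne_zero]
  norm_num

lemma Pfun_phi1 : Pfun phi1 = 1 := by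
  rw [Pfun_eq_of_norm_sq_eq norm_phi1_sq one_pos]
  field_simp [pi_ne_zero]
  norm_num

lemma Pfun_phi0 : Pfun phi0 = 0 := by
  rw [Pfun_eq_of_norm_sq_eq norm_phi0_sq one_pos]
  norm_num

lemma eight_pi_mul_Hfun_phi1 : 8 * π * Hfun phi1 = 1 / 2 := by
  rw [Hfun_eq_of_norm_sq_eq norm_phi1_sq one_pos]
  field_simp [pi_ne_zero]
  norm_num

lemma eight_pi_mul_Hfun_phi0 : 8 * π * Hfun phi0 = 1 := by
  rw [Hfun_eq_of_norm_sq_eq norm_phi0_sq one_pos]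
  field_simp [pi_ne_zero]
  norm_num

lemma Gfun_phi1 (μ : ℝ) : Gfun μ phi1 = 1 / 2 + μ := by
  rw [Gfun, eight_pi_mul_Hfun_phi1, Pfun_phi1, mul_one]

lemma Gfun_phi0 (μ : ℝ) : Gfun μ phi0 = 1 := by
  rw [Gfun, eight_pi_mul_Hfun_phi0, Pfun_phi0, mul_zero, add_zero]

/-- `M(φ₁) = 1`, `P(φ₁) = 1`, `8π H(φ₁) = 1/2`, hence `G_μ(φ₁) = 1/2 + μ` for
every `μ > 0`; in particular `G_μ(φ₁) < G_μ(φ₀) = 1` iff `μ < 1/2`. -/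
theorem stmt10 :
    Mfun phi1 = 1 ∧ Pfun phi1 = 1 ∧ 8 * Real.pi * Hfun phi1 = 1 / 2 ∧
    ∀ μ : ℝ, 0 < μ →
      Gfun μ phi1 = 1 / 2 + μ ∧ Gfun μ phi0 = 1 ∧
      (Gfun μ phi1 < Gfun μ phi0 ↔ μ < 1 / 2) := by
  refine ⟨Mfun_phi1, Pfun_phi1, eight_pi_mul_Hfun_phi1,
    fun μ _ => ⟨Gfun_phi1 μ, Gfun_phi0 μ, ?_⟩⟩
  rw [Gfun_phi1, Gfun_phi0]
  constructor <;> intro <;> linarith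
end

section
/- Let (b_k)_{k≥0} be a sequence of complex numbers with b_0 = 0 and suppose there exist complex numbers (β_j)_{j≥2} with b_k·b_{j-k} = k(j-k)·β_j for all j ≥ 2 and 0 ≤ k ≤ j, and b_0·b_1 = 0. If b_j ≠ 0 for all j ≥ 1, then there exist λ, α ∈ ℂ with b_ℓ = λ·ℓ·α^ℓ for all ℓ ≥ 1. -/
/-!
Writing `b k = k * c k`, the hypothesis says that `c k * c (j - k) = β j` does not depend on `k`.
Comparing `k = 1` and `k = 2` at `j = n + 2` gives `c 1 * c (n + 1) = c 2 * c n`, so `c` is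
geometric with ratio `c 2 / c 1` from `n = 1` on.
-/

theorem eq_div_mul_pow_of_succ_eq_mul {K : Type*} [Field K] {c : ℕ → K} {α : K} (hα : α ≠ 0)
    (h : ∀ n, 1 ≤ n → c (n + 1) = α * c n) : ∀ ℓ, 1 ≤ ℓ → c ℓ = c 1 / α * α ^ ℓ := by
  intro ℓ hℓ
  induction ℓ, hℓ using Nat.le_induction with
  | base => field_simp
  | succ n hn ih => rw [h n hn, ih]; ring

theorem div_mul_div_eq_of_mul_eq_mul {K : Type*} [Field K] [CharZero K] {b : ℕ → K} {j k : ℕ}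
    {γ : K} (h : ∀ k ≤ j, b k * b (j - k) = k * ((j - k : ℕ) : K) * γ) (hk : k ≠ 0)
    (hkj : k < j) : b k / k * (b (j - k) / (j - k : ℕ)) = γ := by
  have hk' : (k : K) ≠ 0 := Nat.cast_ne_zero.mpr hk
  have hjk : ((j - k : ℕ) : K) ≠ 0 := Nat.cast_ne_zero.mpr (by omega)
  rw [div_mul_div_comm, h k hkj.le]
  field_simp

theorem stmt17_general (b : ℕ → ℂ) (β : ℕ → ℂ)
    (hβ : ∀ j : ℕ, 2 ≤ j → ∀ k : ℕ, k ≤ j →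
      b k * b (j - k) = (k : ℂ) * (((j - k : ℕ) : ℕ) : ℂ) * β j)
    (hbnz : ∀ j : ℕ, 1 ≤ j → b j ≠ 0) :
    ∃ lam α : ℂ, ∀ ℓ : ℕ, 1 ≤ ℓ → b ℓ = lam * (ℓ : ℂ) * α ^ ℓ := by
  set c : ℕ → ℂ := fun k => b k / k
  have hc1 : c 1 ≠ 0 := by simpa [c] using hbnz 1 le_rfl
  have hc2 : c 2 ≠ 0 := div_ne_zero (hbnz 2 one_le_two) two_ne_zero
  have hrec : ∀ n, 1 ≤ n → c (n + 1) = c 2 / c 1 * c n := by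
    intro n hn
    have h1 := div_mul_div_eq_of_mul_eq_mul (hβ (n + 2) (by omega)) one_ne_zero (by omega)
    have h2 := div_mul_div_eq_of_mul_eq_mul (hβ (n + 2) (by omega)) two_ne_zero (by omega)
    simp only [Nat.add_sub_cancel, show n + 2 - 1 = n + 1 by omega] at h1 h2
    rw [div_mul_eq_mul_div, eq_div_iff hc1]
    linear_combination h1 - h2
  refine ⟨c 1 / (c 2 / c 1), c 2 / c 1, fun ℓ hℓ => ?_⟩
  have hℓ' : (ℓ : ℂ) ≠ 0 := Nat.cast_ne_zero.mpr (by omega)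
  rw [mul_right_comm, ← eq_div_mul_pow_of_succ_eq_mul (div_ne_zero hc2 hc1) hrec ℓ hℓ]
  exact (div_mul_cancel₀ _ hℓ').symm

/-- If `b 0 = 0`, `b j ≠ 0` for all `j ≥ 1`, and there are `β j` with
`b k * b (j-k) = k (j-k) β j` for all `j ≥ 2` and `0 ≤ k ≤ j` (and `b 0 * b 1 = 0`),
then `b ℓ = λ ℓ α^ℓ` for all `ℓ ≥ 1`, for some `λ, α ∈ ℂ`. -/
theorem stmt17 (b : ℕ → ℂ) (hb0 : b 0 = 0) (β : ℕ → ℂ)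
    (hβ : ∀ j : ℕ, 2 ≤ j → ∀ k : ℕ, k ≤ j →
      b k * b (j - k) = (k : ℂ) * (((j - k : ℕ) : ℕ) : ℂ) * β j)
    (h01 : b 0 * b 1 = 0)
    (hbnz : ∀ j : ℕ, 1 ≤ j → b j ≠ 0) :
    ∃ lam α : ℂ, ∀ ℓ : ℕ, 1 ≤ ℓ → b ℓ = lam * (ℓ : ℂ) * α ^ ℓ :=
  stmt17_general b β hβ hbnz
end
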